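/- Suppose x is a local cut point of a GSC F. Then there exists m ∈ ℤ⁺ such that x is a cut point of E'_m(x) := ⋃_{𝐢 ∈ Ω_m(x)} φ_𝐢(F). -/

import Mathlib

open Set Topology

noncomputable def phi (N : ℕ) (i : ℕ × ℕ) (p : ℝ × ℝ) : ℝ × ℝ :=
  ((p.1 + (i.1 : ℝ)) / (N : ℝ), (p.2 + (i.2 : ℝ)) / (N : ℝ))

noncomputable def phiW (N : ℕ) (l : List (ℕ × ℕ)) : ℝ × ℝ → ℝ × ℝ :=
  l.foldr (fun i g => phi N i ∘ g) id

def Words (D : Finset (ℕ × ℕ)) (k : ℕ) : Set (List (ℕ × ℕ)) :=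
  {l | l.length = k ∧ ∀ a ∈ l, a ∈ D}

def GoodDigits (N : ℕ) (D : Finset (ℕ × ℕ)) : Prop :=
  2 ≤ N ∧ (∀ i ∈ D, i.1 < N ∧ i.2 < N) ∧ 1 < D.card ∧ D.card < N ^ 2

def IsAttractor (N : ℕ) (D : Finset (ℕ × ℕ)) (F : Set (ℝ × ℝ)) : Prop :=
  F.Nonempty ∧ IsCompact F ∧ F = ⋃ i ∈ D, phi N i '' F

def OmegaW (N : ℕ) (D : Finset (ℕ × ℕ)) (F : Set (ℝ × ℝ)) (x : ℝ × ℝ) (k : ℕ) :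
    Set (List (ℕ × ℕ)) :=
  {l | l ∈ Words D k ∧ x ∈ phiW N l '' F}

def Ek (N : ℕ) (D : Finset (ℕ × ℕ)) (F : Set (ℝ × ℝ)) (x : ℝ × ℝ) (k : ℕ) :
    Set (ℝ × ℝ) :=
  ⋃ l ∈ Words D k \ OmegaW N D F x k, phiW N l '' F

def IsRep (N : ℕ) (D : Finset (ℕ × ℕ)) (F : Set (ℝ × ℝ)) (x : ℝ × ℝ)
    (ii : ℕ → ℕ × ℕ) : Prop :=
  (∀ k, ii k ∈ D) ∧ ∀ k : ℕ, x ∈ phiW N (List.ofFn fun j : Fin k => ii (j : ℕ)) '' F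

def SepComp (E A B : Set (ℝ × ℝ)) : Prop :=
  A ⊆ E ∧ B ⊆ E ∧
    ∀ y ∈ A, ∀ z ∈ B, connectedComponentIn E y ≠ connectedComponentIn E z

def WellSep (N : ℕ) (D : Finset (ℕ × ℕ)) (F : Set (ℝ × ℝ)) (x : ℝ × ℝ) (n : ℕ)
    (ω τ : List (ℕ × ℕ)) : Prop :=
  ∀ p : ℕ, 1 ≤ p → SepComp (Ek N D F x (n + p)) (phiW N ω '' F) (phiW N τ '' F)

/-! ### Auxiliary lemmas -/

lemma phiW_cons (N : ℕ) (i : ℕ × ℕ) (l : List (ℕ × ℕ)) :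
    phiW N (i :: l) = phi N i ∘ phiW N l := rfl

lemma phiW_nil (N : ℕ) : phiW N ([] : List (ℕ × ℕ)) = id := rfl

lemma continuous_phi (N : ℕ) (i : ℕ × ℕ) : Continuous (phi N i) := by
  unfold phi; fun_prop

lemma continuous_phiW (N : ℕ) (l : List (ℕ × ℕ)) : Continuous (phiW N l) := by
  induction l with
  | nil => exact continuous_id
  | cons i l ih => rw [phiW_cons]; exact (continuous_phi N i).comp ih

lemma dist_phi (N : ℕ) (hN : 0 < N) (i : ℕ × ℕ) (p q : ℝ × ℝ) :
    dist (phi N i p) (phi N i q) = dist p q / N := by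
  have hN0 : (0:ℝ) < N := by exact_mod_cast hN
  have h1 : dist (phi N i p).1 (phi N i q).1 = dist p.1 q.1 / N := by
    simp only [phi, Real.dist_eq]
    rw [div_sub_div_same, show p.1 + i.1 - (q.1 + i.1) = p.1 - q.1 by ring,
      abs_div, abs_of_pos hN0]
  have h2 : dist (phi N i p).2 (phi N i q).2 = dist p.2 q.2 / N := by
    simp only [phi, Real.dist_eq]
    rw [div_sub_div_same, show p.2 + i.2 - (q.2 + i.2) = p.2 - q.2 by ring,
      abs_div, abs_of_pos hN0]
  rw [Prod.dist_eq, Prod.dist_eq, h1, h2, max_div_div_right hN0.le]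

lemma dist_phiW (N : ℕ) (hN : 0 < N) (l : List (ℕ × ℕ)) (p q : ℝ × ℝ) :
    dist (phiW N l p) (phiW N l q) = dist p q / N ^ l.length := by
  induction l with
  | nil => simp [phiW_nil]
  | cons i l ih =>
    rw [phiW_cons]
    simp only [Function.comp_apply, List.length_cons]
    rw [dist_phi N hN, ih, div_div, pow_succ]

lemma F_bdd (N : ℕ) (D : Finset (ℕ × ℕ)) (hND : GoodDigits N D)
    (F : Set (ℝ × ℝ)) (hF : IsAttractor N D F) :
    ∀ p ∈ F, p.1 ∈ Icc (0:ℝ) 1 ∧ p.2 ∈ Icc (0:ℝ) 1 := by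
  obtain ⟨hFne, hFcpt, hFeq⟩ := hF
  have hN1 : (1:ℝ) < N := by exact_mod_cast lt_of_lt_of_le one_lt_two hND.1
  have hN0 : (0:ℝ) < N := by linarith
  have keyU : ∀ f : ℝ × ℝ → ℝ, Continuous f →
      (∀ i ∈ D, ∀ q : ℝ × ℝ, f (phi N i q) ≤ (f q + (N - 1)) / N) →
      ∀ p ∈ F, f p ≤ 1 := by
    intro f hfc hfb p hp
    obtain ⟨z, hzF, hzmax⟩ := hFcpt.exists_isMaxOn hFne hfc.continuousOn
    have hz : z ∈ ⋃ i ∈ D, phi N i '' F := hFeq ▸ hzF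
    simp only [mem_iUnion, mem_image] at hz
    obtain ⟨i, hiD, q, hqF, hq⟩ := hz
    have hqz : f q ≤ f z := hzmax hqF
    have h1 : f z ≤ (f z + (N - 1)) / N := by
      calc f z = f (phi N i q) := by rw [hq]
        _ ≤ (f q + (N-1)) / N := hfb i hiD q
        _ ≤ (f z + (N-1)) / N := by gcongr
    have hz1 : f z ≤ 1 := by
      rw [le_div_iff₀ hN0] at h1; nlinarith
    exact le_trans (hzmax hp) hz1
  have keyL : ∀ f : ℝ × ℝ → ℝ, Continuous f →
      (∀ i ∈ D, ∀ q : ℝ × ℝ, f q / N ≤ f (phi N i q)) →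
      ∀ p ∈ F, 0 ≤ f p := by
    intro f hfc hfb p hp
    obtain ⟨z, hzF, hzmin⟩ := hFcpt.exists_isMinOn hFne hfc.continuousOn
    have hz : z ∈ ⋃ i ∈ D, phi N i '' F := hFeq ▸ hzF
    simp only [mem_iUnion, mem_image] at hz
    obtain ⟨i, hiD, q, hqF, hq⟩ := hz
    have hqz : f z ≤ f q := hzmin hqF
    have h1 : f z / N ≤ f z := by
      calc f z / N ≤ f q / N := by gcongr
        _ ≤ f (phi N i q) := hfb i hiD q
        _ = f z := by rw [hq]
    have hz0 : 0 ≤ f z := by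
      rw [div_le_iff₀ hN0] at h1; nlinarith
    exact le_trans hz0 (hzmin hp)
  have hdig : ∀ i ∈ D, ((i:ℕ×ℕ).1 : ℝ) ≤ N - 1 ∧ ((i:ℕ×ℕ).2 : ℝ) ≤ N - 1 := by
    intro i hi
    have h1 := (hND.2.1 i hi).1
    have h2 := (hND.2.1 i hi).2
    constructor <;> [skip; skip] <;>
      · rw [le_sub_iff_add_le]
        exact_mod_cast Nat.succ_le_of_lt (by assumption)
  intro p hp
  refine ⟨⟨?_, ?_⟩, ?_, ?_⟩
  · exact keyL (fun p => p.1) continuous_fst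
      (fun i hi q => by
        simp only [phi]; gcongr
        exact le_add_of_nonneg_right (by positivity)) p hp
  · exact keyU (fun p => p.1) continuous_fst
      (fun i hi q => by
        have := (hdig i hi).1
        simp only [phi]; gcongr) p hp
  · exact keyL (fun p => p.2) continuous_snd
      (fun i hi q => by
        simp only [phi]; gcongr
        exact le_add_of_nonneg_right (by positivity)) p hp
  · exact keyU (fun p => p.2) continuous_snd
      (fun i hi q => by
        have := (hdig i hi).2
        simp only [phi]; gcongr) p hp

lemma words_finite (D : Finset (ℕ × ℕ)) : ∀ m, (Words D m).Finite := by
  intro m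
  induction m with
  | zero =>
    apply Set.Finite.subset (Set.finite_singleton ([] : List (ℕ × ℕ)))
    rintro l ⟨hl, -⟩
    simp_all [List.length_eq_zero_iff]
  | succ m ih =>
    apply Set.Finite.subset (Set.Finite.image2 List.cons D.finite_toSet ih)
    rintro l ⟨hl, hmem⟩
    match l with
    | [] => simp at hl
    | i :: l =>
      exact mem_image2_of_mem (hmem i (by simp))
        ⟨by simpa using hl, fun a ha => hmem a (by simp [ha])⟩

lemma cell_subset (N : ℕ) (D : Finset (ℕ × ℕ)) (F : Set (ℝ × ℝ))
    (hF : IsAttractor N D F) (l : List (ℕ × ℕ)) (hl : ∀ a ∈ l, a ∈ D) :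
    phiW N l '' F ⊆ F := by
  induction l with
  | nil => simp [phiW_nil]
  | cons i l ih =>
    rw [phiW_cons, image_comp]
    calc phi N i '' (phiW N l '' F)
        ⊆ phi N i '' F := image_mono (ih fun a ha => hl a (by simp [ha]))
      _ ⊆ ⋃ j ∈ D, phi N j '' F := by
          exact subset_biUnion_of_mem (u := fun j => phi N j '' F) (hl i (by simp))
      _ = F := hF.2.2.symm

lemma F_cover (N : ℕ) (D : Finset (ℕ × ℕ)) (F : Set (ℝ × ℝ))
    (hF : IsAttractor N D F) : ∀ m, F ⊆ ⋃ l ∈ Words D m, phiW N l '' F := by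
  intro m
  induction m with
  | zero =>
    intro p hp
    exact mem_biUnion (show ([]:List (ℕ×ℕ)) ∈ Words D 0 by constructor <;> simp)
      (by simpa [phiW_nil] using hp)
  | succ m ih =>
    intro p hp
    have hp' : p ∈ ⋃ i ∈ D, phi N i '' F := hF.2.2 ▸ hp
    simp only [mem_iUnion, mem_image] at hp'
    obtain ⟨i, hiD, q, hqF, hq⟩ := hp'
    obtain ⟨l, hl, r, hrF, hr⟩ := by simpa only [mem_iUnion, mem_image] using ih hqF
    refine mem_biUnion (show (i :: l) ∈ Words D (m+1) from
      ⟨by simp [hl.1], fun a ha => ?_⟩) ⟨r, hrF, ?_⟩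
    · rcases List.mem_cons.mp ha with h | h
      · exact h ▸ hiD
      · exact hl.2 a h
    · rw [phiW_cons, Function.comp_apply, hr, hq]

lemma closure_piece {U u v : Set (ℝ × ℝ)} {x : ℝ × ℝ} (hU : IsConnected U)
    (hxU : x ∈ U) (hu : IsOpen u) (hv : IsOpen v) (hcov : U \ {x} ⊆ u ∪ v)
    (hdisj : ¬((U \ {x}) ∩ (u ∩ v)).Nonempty)
    (hA : ((U \ {x}) ∩ u).Nonempty) :
    x ∈ closure (u ∩ (U \ {x})) := by
  by_contra hxcl
  have hO1 : IsOpen (u \ {x}) := hu.sdiff isClosed_singleton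
  have hO2 : IsOpen (v ∪ (closure (u ∩ (U \ {x})))ᶜ) :=
    hv.union isClosed_closure.isOpen_compl
  have hcov' : U ⊆ (u \ {x}) ∪ (v ∪ (closure (u ∩ (U \ {x})))ᶜ) := by
    intro p hp
    by_cases hpx : p = x
    · exact Or.inr (Or.inr (hpx ▸ hxcl))
    · rcases hcov ⟨hp, hpx⟩ with h | h
      · exact Or.inl ⟨h, hpx⟩
      · exact Or.inr (Or.inl h)
  have h1 : (U ∩ (u \ {x})).Nonempty := by
    obtain ⟨a, ⟨haU, hax⟩, hau⟩ := hA
    exact ⟨a, haU, hau, hax⟩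
  have h2 : (U ∩ (v ∪ (closure (u ∩ (U \ {x})))ᶜ)).Nonempty :=
    ⟨x, hxU, Or.inr hxcl⟩
  obtain ⟨p, hpU, ⟨hpu, hpx⟩, hpvc⟩ :=
    hU.isPreconnected _ _ hO1 hO2 hcov' h1 h2
  rcases hpvc with hpv | hpc
  · exact hdisj ⟨p, ⟨hpU, hpx⟩, hpu, hpv⟩
  · exact hpc (subset_closure ⟨hpu, hpU, hpx⟩)

theorem stmt12 (N : ℕ) (D : Finset (ℕ × ℕ)) (hND : GoodDigits N D)
    (F : Set (ℝ × ℝ)) (hF : IsAttractor N D F) (hFconn : IsConnected F)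
    (x : ℝ × ℝ) (hx : x ∈ F)
    (hlocal : ∃ U, U ⊆ F ∧ U ∈ nhdsWithin x F ∧ IsConnected U ∧
        ¬ IsPreconnected (U \ {x})) :
    ∃ m : ℕ, 1 ≤ m ∧
      ¬ IsPreconnected ((⋃ l ∈ OmegaW N D F x m, phiW N l '' F) \ {x}) := by
  obtain ⟨U, hUF, hUnhd, hUconn, hUdisc⟩ := hlocal
  have hN1 : (1:ℝ) < N := by exact_mod_cast lt_of_lt_of_le one_lt_two hND.1
  have hNpos : 0 < N := lt_of_lt_of_le Nat.zero_lt_two hND.1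
  -- extract the separation of U \ {x}
  rw [IsPreconnected] at hUdisc
  push_neg at hUdisc
  obtain ⟨u, v, hu, hv, hcov, hau, hav, hdisj⟩ := hUdisc
  have hxU : x ∈ U := mem_of_mem_nhdsWithin hx hUnhd
  have hclu : x ∈ closure (u ∩ (U \ {x})) :=
    closure_piece hUconn hxU hu hv hcov (not_nonempty_iff_eq_empty.mpr hdisj) hau
  have hclv : x ∈ closure (v ∩ (U \ {x})) := by
    refine closure_piece hUconn hxU hv hu (by rwa [union_comm]) ?_ hav
    rw [inter_comm v u]; exact not_nonempty_iff_eq_empty.mpr hdisj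
  -- obtain an open set V and a radius δ with ball x δ ∩ F ⊆ U
  obtain ⟨V, hVopen, hxV, hVU⟩ := mem_nhdsWithin.mp hUnhd
  obtain ⟨δ, hδpos, hball⟩ := Metric.isOpen_iff.mp hVopen x hxV
  -- choose m with 1 ≤ m and 1 / N^m < δ
  obtain ⟨n, hn⟩ := pow_unbounded_of_one_lt (1/δ) hN1
  set m := max n 1 with hm
  have hm1 : 1 ≤ m := le_max_right n 1
  have hNm : (1:ℝ)/δ < (N:ℝ) ^ m := lt_of_lt_of_le hn (by
    apply pow_le_pow_right₀ (by linarith) (le_max_left n 1))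
  have hNmpos : (0:ℝ) < (N:ℝ) ^ m := by positivity
  have hsmall : (1:ℝ) / (N:ℝ) ^ m < δ := by
    rw [div_lt_iff₀ hNmpos]
    rw [div_lt_iff₀ hδpos] at hNm
    linarith [hNm, mul_comm δ ((N:ℝ)^m)]
  set E' := ⋃ l ∈ OmegaW N D F x m, phiW N l '' F with hE'
  refine ⟨m, hm1, ?_⟩
  -- E' ⊆ F
  have hE'F : E' ⊆ F := by
    refine iUnion₂_subset fun l hl => cell_subset N D F hF l hl.1.2
  -- every point of E' is within 1/N^m of x
  have hE'ball : E' ⊆ Metric.ball x δ := by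
    intro y hy
    simp only [hE', mem_iUnion, mem_image] at hy
    obtain ⟨l, ⟨⟨hlen, hlD⟩, q, hqF, hq⟩, p, hpF, hp⟩ := hy
    have hdistpq : dist p q ≤ 1 := by
      obtain ⟨⟨hp1, hp2⟩, hp3, hp4⟩ := F_bdd N D hND F hF p hpF
      obtain ⟨⟨hq1, hq2⟩, hq3, hq4⟩ := F_bdd N D hND F hF q hqF
      rw [Prod.dist_eq, Real.dist_eq, Real.dist_eq]
      apply max_le <;> rw [abs_sub_le_iff] <;> constructor <;> linarith
    have : dist y x = dist p q / (N:ℝ) ^ m := by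
      rw [← hp, ← hq, dist_phiW N hNpos, hlen]
    rw [Metric.mem_ball, this]
    calc dist p q / (N:ℝ)^m ≤ 1 / (N:ℝ)^m := by gcongr
      _ < δ := hsmall
  have hE'U : E' ⊆ U := fun y hy => hVU ⟨hball (hE'ball hy), hE'F hy⟩
  -- the complement Ek is compact and misses x
  have hEkcpt : IsCompact (Ek N D F x m) := by
    apply Set.Finite.isCompact_biUnion ((words_finite D m).subset diff_subset)
    exact fun l _ => hF.2.1.image (continuous_phiW N l)
  have hxEk : x ∉ Ek N D F x m := by
    intro hxk
    simp only [Ek, mem_iUnion] at hxk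
    obtain ⟨l, ⟨hlW, hlO⟩, hxl⟩ := hxk
    exact hlO ⟨hlW, hxl⟩
  obtain ⟨ε, hεpos, hεball⟩ :=
    Metric.isOpen_iff.mp hEkcpt.isClosed.isOpen_compl x hxEk
  -- points of F within ε of x are in E'
  have hnbhd : ∀ p ∈ F, dist p x < ε → p ∈ E' := by
    intro p hpF hpd
    obtain ⟨l, hlW, hpl⟩ := by
      simpa only [mem_iUnion, exists_prop] using F_cover N D F hF m hpF
    by_cases hxl : x ∈ phiW N l '' F
    · exact mem_biUnion ⟨hlW, hxl⟩ hpl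
    · exact absurd (mem_biUnion (mem_diff_of_mem hlW fun h => hxl h.2) hpl :
        p ∈ Ek N D F x m) (hεball (Metric.mem_ball.mpr hpd))
  -- find points of E' \ {x} in u and in v
  have hfind : ∀ w : Set (ℝ × ℝ), x ∈ closure (w ∩ (U \ {x})) →
      ((E' \ {x}) ∩ w).Nonempty := by
    intro w hcl
    obtain ⟨a, ha, hda⟩ := Metric.mem_closure_iff.mp hcl ε hεpos
    obtain ⟨haw, haU, hax⟩ := ha
    exact ⟨a, ⟨hnbhd a (hUF haU) (by rwa [dist_comm] at hda), hax⟩, haw⟩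
  intro hpre
  obtain ⟨p, ⟨hpE', hpx⟩, hpu, hpv⟩ := hpre u v hu hv
    (fun y hy => hcov ⟨hE'U hy.1, hy.2⟩) (hfind u hclu) (hfind v hclv)
  have hmem : p ∈ U \ {x} ∩ (u ∩ v) := ⟨⟨hE'U hpE', hpx⟩, hpu, hpv⟩
  rw [hdisj] at hmem
  exact hmem
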